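/- Let T be a regular strategy tree with exactly κ non-isomorphic subtrees such that every infinite path π of T satisfies T(π), k ⊨_s (GF p ∧ GF ¬p), where p is the constraint x_c = y_c. Then every concrete model σ admitted along an infinite path of T (i.e., such that μ(σ) = T(π) for some infinite path π) is (κ+1)-bounded: σ has infinitely many p-blocks, each of length at most κ + 1. -/

import Mathlib

/-- The gap function (with ceiling `c`) associated with a mapping `m` on a finite set of
variables: enumerating the variables as `x_0, x_1, …` sorted by `m`-values, `gp x_0 = 0` and
`gp x_{l+1} = gp x_l + min (m x_{l+1} - m x_l) c`.  Equivalently (closed form used here),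
`gp x` is the sum, over the distinct values `v` of `m` below `m x`, of
`min (next value above v - v) c`. -/
noncomputable def gapFun {V : Type} [Fintype V] (c : ℕ) (m : V → ℤ) (x : V) : ℕ :=
  ∑ v ∈ (Finset.univ.image m).filter (fun w => w < m x),
    min ((WithTop.untopD v ((Finset.univ.image m).filter (fun w => v < w)).min) - v).toNat c
/-- Data of a frame over look-ahead variables `Va` and future-blind variables `Vb`: a binary
relation on look-ahead terms `X^j y` (encoded as pairs `(j, y) : ℕ × Va`) together with, for
each position offset `j`, a candidate gap function `Vb → ℕ`.  For an `s`-frame only the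
indices `j < s` are relevant. -/
abbrev FrameData (Va Vb : Type) := (ℕ × Va → ℕ × Va → Prop) × (ℕ → Vb → ℕ)
/-- The symbolic model `μ(σ)` associated with a concrete model `σ` (for `X`-length `k`):
its `i`-th frame is the `min (i+1) (k+1)`-frame whose pre-order is induced by the valuations
at positions `i - min i k, …, i` (the term `X^j y` denoting the value of `y` at position
`i - min i k + j`; indices are clamped to the valid range) and whose `j`-th gap function is
the gap function associated with the future-blind part of position `i - min i k + j`. -/
noncomputable def mu {Va Vb : Type} [Fintype Vb] (k : ℕ)
    (σ : ℕ → Va ⊕ Vb → ℤ) : ℕ → FrameData Va Vb :=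
  fun i =>
    (fun t1 t2 =>
        σ (i - min i k + min t1.1 (min i k)) (Sum.inl t1.2) ≤
          σ (i - min i k + min t2.1 (min i k)) (Sum.inl t2.2),
     fun j => gapFun (Fintype.card Vb - 1)
        (fun b => σ (i - min i k + min j (min i k)) (Sum.inr b)))
/-- Constraint LTL formulas over look-ahead variables `Va` and future-blind variables `Vb`
for the constraint system `(D, <, =)`.  Atomic constraints compare two look-ahead terms
`X^i x`, `X^j y` (`x, y ∈ Va`) or two future-blind variables (`∈ Vb`). -/
inductive CLTL (Va Vb : Type) : Type
  | ltL : ℕ → Va → ℕ → Va → CLTL Va Vb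
  | eqL : ℕ → Va → ℕ → Va → CLTL Va Vb
  | ltB : Vb → Vb → CLTL Va Vb
  | eqB : Vb → Vb → CLTL Va Vb
  | not : CLTL Va Vb → CLTL Va Vb
  | or : CLTL Va Vb → CLTL Va Vb → CLTL Va Vb
  | next : CLTL Va Vb → CLTL Va Vb
  | untl : CLTL Va Vb → CLTL Va Vb → CLTL Va Vb

/-- The `X`-length of a CLTL formula: the maximal `i` such that a look-ahead term `X^i y`
occurs in it (a formula "is of `X`-length `k`" iff its `xlen` is at most `k`). -/
def xlen {Va Vb : Type} : CLTL Va Vb → ℕ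
  | .ltL i _ j _ => max i j
  | .eqL i _ j _ => max i j
  | .ltB _ _ => 0
  | .eqB _ _ => 0
  | .not φ => xlen φ
  | .or φ ψ => max (xlen φ) (xlen ψ)
  | .next φ => xlen φ
  | .untl φ ψ => max (xlen φ) (xlen ψ)

/-- Concrete semantics of CLTL over a linearly ordered domain `D`:
`csat σ i φ` means `σ, i ⊨ φ`. -/
def csat {Va Vb D : Type} [LinearOrder D] (σ : ℕ → Va ⊕ Vb → D) :
    ℕ → CLTL Va Vb → Prop
  | i, .ltL i1 x j1 y => σ (i + i1) (Sum.inl x) < σ (i + j1) (Sum.inl y)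
  | i, .eqL i1 x j1 y => σ (i + i1) (Sum.inl x) = σ (i + j1) (Sum.inl y)
  | i, .ltB x y => σ i (Sum.inr x) < σ i (Sum.inr y)
  | i, .eqB x y => σ i (Sum.inr x) = σ i (Sum.inr y)
  | i, .not φ => ¬ csat σ i φ
  | i, .or φ ψ => csat σ i φ ∨ csat σ i ψ
  | i, .next φ => csat σ (i + 1) φ
  | i, .untl φ ψ => ∃ j, i ≤ j ∧ csat σ j ψ ∧ ∀ l, i ≤ l → l < j → csat σ l φ

/-- Symbolic semantics of CLTL on a sequence of frames: `ssat ρ i φ` means `ρ, i ⊨_s φ`.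
A look-ahead constraint is checked against the pre-order of the `i`-th frame, a future-blind
constraint against the gap function of the `i`-th frame at offset `0`. -/
def ssat {Va Vb : Type} (ρ : ℕ → FrameData Va Vb) : ℕ → CLTL Va Vb → Prop
  | i, .ltL i1 x j1 y => (ρ i).1 (i1, x) (j1, y) ∧ ¬ (ρ i).1 (j1, y) (i1, x)
  | i, .eqL i1 x j1 y => (ρ i).1 (i1, x) (j1, y) ∧ (ρ i).1 (j1, y) (i1, x)
  | i, .ltB x y => (ρ i).2 0 x < (ρ i).2 0 y
  | i, .eqB x y => (ρ i).2 0 x = (ρ i).2 0 y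
  | i, .not φ => ¬ ssat ρ i φ
  | i, .or φ ψ => ssat ρ i φ ∨ ssat ρ i ψ
  | i, .next φ => ssat ρ (i + 1) φ
  | i, .untl φ ψ => ∃ j, i ≤ j ∧ ssat ρ j ψ ∧ ∀ l, i ≤ l → l < j → ssat ρ l φ
/-- The set `G` of gap functions associated with mappings of the environment variables
`E ⊆ Vb` to `ℤ` (with ceiling `|Vb| - 1`), as a type. -/
def GapFuns (Vb : Type) [Fintype Vb] (E : Finset Vb) : Type :=
  {g : {x : Vb // x ∈ E} → ℕ //
    ∃ em : {x : Vb // x ∈ E} → ℤ, g = gapFun (Fintype.card Vb - 1) em}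

/-- The size of the frame labelling a tree node `η`: `min |η| (k+1)`. -/
def nsize {α : Type} (k : ℕ) (η : List α) : ℕ := min η.length (k + 1)

/-- `f` is (the data of) an `s`-frame: its relation is a total pre-order on the look-ahead
terms with index `< s`, and for each `j < s` its `j`-th gap data is the gap function
associated with some mapping `Vb → ℤ`. -/
def IsFrameAt {Va Vb : Type} [Fintype Vb] (s : ℕ) (f : FrameData Va Vb) : Prop :=
  (∀ t1 t2 : ℕ × Va, t1.1 < s → t2.1 < s → (f.1 t1 t2 ∨ f.1 t2 t1)) ∧
  (∀ t1 t2 t3 : ℕ × Va, t1.1 < s → t2.1 < s → t3.1 < s →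
    f.1 t1 t2 → f.1 t2 t3 → f.1 t1 t3) ∧
  (∀ j < s, ∃ m : Vb → ℤ, f.2 j = gapFun (Fintype.card Vb - 1) m)

/-- One-step compatibility (for `X`-length `k`) between an `s`-frame `f` and the frame `g`
following it: if `s < k + 1` then `g` is an `(s+1)`-frame and the two frames agree on the
shared terms/offsets `< s`; otherwise both are `(k+1)`-frames and `g` is `f` shifted one
step to the left. -/
def OneStepT {Va Vb : Type} (k s : ℕ) (f g : FrameData Va Vb) : Prop :=
  if s < k + 1 then
    (∀ t1 t2 : ℕ × Va, t1.1 < s → t2.1 < s → (f.1 t1 t2 ↔ g.1 t1 t2)) ∧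
    (∀ j < s, f.2 j = g.2 j)
  else
    (∀ t1 t2 : ℕ × Va, t1.1 + 1 < k + 1 → t2.1 + 1 < k + 1 →
      (f.1 (t1.1 + 1, t1.2) (t2.1 + 1, t2.2) ↔ g.1 t1 t2)) ∧
    (∀ j : ℕ, j + 1 < k + 1 → f.2 (j + 1) = g.2 j)

/-- Gap compatibility between a gap function `g ∈ G` (for the environment variables) and an
`s`-frame `fr`: the gaps `fr` imposes between environment variables at its last offset
`s - 1` are the gaps imposed by `g`. -/
def GapCompat {Va Vb : Type} [Fintype Vb] {E : Finset Vb}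
    (g : GapFuns Vb E) (s : ℕ) (fr : FrameData Va Vb) : Prop :=
  ∀ x y : {x : Vb // x ∈ E},
    (g.val x : ℤ) - (g.val y : ℤ) =
      (fr.2 (s - 1) x.val : ℤ) - (fr.2 (s - 1) y.val : ℤ)

/-- A strategy tree (for `X`-length `k`): a `|G|`-branching tree whose nodes are labelled
with frames, the node `η` carrying a `min |η| (k+1)`-frame, such that each parent/child pair
is one-step compatible and each child is gap compatible with the gap function labelling the
edge leading to it. -/
def StrategyTree {Va Vb : Type} [Fintype Vb] (E : Finset Vb) (k : ℕ)
    (T : List (GapFuns Vb E) → FrameData Va Vb) : Prop :=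
  ∀ η : List (GapFuns Vb E),
    IsFrameAt (nsize k η) (T η) ∧
    ∀ g : GapFuns Vb E,
      OneStepT k (nsize k η) (T η) (T (η ++ [g])) ∧
      GapCompat g (nsize k (η ++ [g])) (T (η ++ [g]))

/-- The node at depth `i + 1` along the infinite path `π` of a tree. -/
def pathNodes {α : Type} (π : ℕ → α) (i : ℕ) : List α :=
  List.ofFn fun j : Fin (i + 1) => π j.val

/-- Two frame data agree as `s`-frames: same pre-order on terms with index `< s` and same
gap functions at offsets `< s`. -/
def FrameAgree {Va Vb : Type} (s : ℕ) (f g : FrameData Va Vb) : Prop :=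
  (∀ t1 t2 : ℕ × Va, t1.1 < s → t2.1 < s → (f.1 t1 t2 ↔ g.1 t1 t2)) ∧
  (∀ j < s, f.2 j = g.2 j)

/-- `(T, L)` is a winning strategy tree for the winning condition `φ` (of `X`-length `k`):
`T` is a strategy tree, and along every infinite path `π` the frame sequence `T(π)` is the
symbolic model associated with the concrete model `L(π)` and symbolically satisfies `φ` at
position `k`. -/
def WinningStrategyTree {Va Vb : Type} [Fintype Vb] (E : Finset Vb) (k : ℕ)
    (φ : CLTL Va Vb) (T : List (GapFuns Vb E) → FrameData Va Vb)
    (L : List (GapFuns Vb E) → (Va ⊕ Vb → ℤ)) : Prop :=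
  StrategyTree E k T ∧
  ∀ π : ℕ → GapFuns Vb E,
    (∀ i : ℕ, FrameAgree (min (i + 1) (k + 1)) (T (pathNodes π i))
      (mu k (fun j => L (pathNodes π j)) i)) ∧
    ssat (fun i => T (pathNodes π i)) k φ
/-- The relation `⊑_T` on node variables `(η, x)` (node `η`, look-ahead variable `x`) of a
strategy tree `T`: one node is an ancestor of the other, the height difference `h` is at most
`s - 1` where `s` is the size of the frame at the deeper node, and the frame at the deeper
node orders the corresponding terms (`X^{s-1}` for the deeper node's variable, `X^{s-1-h}`
for the ancestor's variable) accordingly. -/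
def sqle {Va Vb : Type} [Fintype Vb] {E : Finset Vb} (k : ℕ)
    (T : List (GapFuns Vb E) → FrameData Va Vb)
    (u v : List (GapFuns Vb E) × Va) : Prop :=
  (u.1 <+: v.1 ∧ v.1.length - u.1.length + 1 ≤ nsize k v.1 ∧
    (T v.1).1 (nsize k v.1 - 1 - (v.1.length - u.1.length), u.2)
      (nsize k v.1 - 1, v.2)) ∨
  (v.1 <+: u.1 ∧ u.1.length - v.1.length + 1 ≤ nsize k u.1 ∧
    (T u.1).1 (nsize k u.1 - 1, u.2)
      (nsize k u.1 - 1 - (u.1.length - v.1.length), v.2))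

/-- The strict relation `⊏_T` induced by `⊑_T`. -/
def sqlt {Va Vb : Type} [Fintype Vb] {E : Finset Vb} (k : ℕ)
    (T : List (GapFuns Vb E) → FrameData Va Vb)
    (u v : List (GapFuns Vb E) × Va) : Prop :=
  sqle k T u v ∧ ¬ sqle k T v u

/-- `T` has bounded chains: for any two node variables `u`, `v` there is a bound `N` such
that every chain `u ⊏⁺ c_1 ⊏⁺ ⋯ ⊏⁺ c_r ⊏⁺ v` has length `r ≤ N`. -/
def BoundedChains {Va Vb : Type} [Fintype Vb] {E : Finset Vb} (k : ℕ)
    (T : List (GapFuns Vb E) → FrameData Va Vb) : Prop :=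
  ∀ u v : List (GapFuns Vb E) × Va, ∃ N : ℕ,
    ∀ l : List (List (GapFuns Vb E) × Va),
      List.Chain (Relation.TransGen (sqlt k T)) u (l ++ [v]) → l.length ≤ N

/-- The node `η` lies on the infinite path `π`. -/
def OnPath {α : Type} (π : ℕ → α) (η : List α) : Prop :=
  η = List.ofFn fun j : Fin η.length => π j.val

/-- The subtree of `T` rooted at `η`. -/
def Subtree {Va Vb : Type} [Fintype Vb] {E : Finset Vb}
    (T : List (GapFuns Vb E) → FrameData Va Vb) (η : List (GapFuns Vb E)) :
    List (GapFuns Vb E) → FrameData Va Vb :=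
  fun η' => T (η ++ η')

/-- `T` is regular: it has only finitely many distinct subtrees. -/
def RegularTree {Va Vb : Type} [Fintype Vb] {E : Finset Vb}
    (T : List (GapFuns Vb E) → FrameData Va Vb) : Prop :=
  {S : List (GapFuns Vb E) → FrameData Va Vb | ∃ η, S = Subtree T η}.Finite

/-- There is an infinite forward chain along the infinite path `π`: infinite sequences of
node variables `(η_i, x)` and `(η_i', y)` on `π`, each sequence descending in the tree, with
`(η_i, x) ⊏⁺ (η_{i+1}, x)`, `(η_i, x) ⊑ (η_i', y)` and `(η_{i+1}', y) ⊏* (η_i', y)` for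
all `i`. -/
def FwdChainOn {Va Vb : Type} [Fintype Vb] {E : Finset Vb} (k : ℕ)
    (T : List (GapFuns Vb E) → FrameData Va Vb) (π : ℕ → GapFuns Vb E) : Prop :=
  ∃ (x y : Va) (a b : ℕ → List (GapFuns Vb E)),
    (∀ i, OnPath π (a i)) ∧ (∀ i, OnPath π (b i)) ∧
    (∀ i, a i <+: a (i + 1)) ∧ (∀ i, b i <+: b (i + 1)) ∧
    (∀ i, Relation.TransGen (sqlt k T) (a i, x) (a (i + 1), x)) ∧
    (∀ i, sqle k T (a i, x) (b i, y)) ∧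
    (∀ i, Relation.ReflTransGen (sqlt k T) (b (i + 1), y) (b i, y))

/-- There is an infinite backward chain along the infinite path `π`: dually to
`FwdChainOn`, with `(η_{i+1}, x) ⊏⁺ (η_i, x)`, `(η_i', y) ⊑ (η_i, x)` and
`(η_i', y) ⊏* (η_{i+1}', y)` for all `i`. -/
def BwdChainOn {Va Vb : Type} [Fintype Vb] {E : Finset Vb} (k : ℕ)
    (T : List (GapFuns Vb E) → FrameData Va Vb) (π : ℕ → GapFuns Vb E) : Prop :=
  ∃ (x y : Va) (a b : ℕ → List (GapFuns Vb E)),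
    (∀ i, OnPath π (a i)) ∧ (∀ i, OnPath π (b i)) ∧
    (∀ i, a i <+: a (i + 1)) ∧ (∀ i, b i <+: b (i + 1)) ∧
    (∀ i, Relation.TransGen (sqlt k T) (a (i + 1), x) (a i, x)) ∧
    (∀ i, sqle k T (b i, y) (a i, x)) ∧
    (∀ i, Relation.ReflTransGen (sqlt k T) (b i, y) (b (i + 1), y))
/-- Prompt-CLTL formulas: CLTL extended with the prompt-eventually operator `F_P`. -/
inductive PCLTL (Va Vb : Type) : Type
  | ltL : ℕ → Va → ℕ → Va → PCLTL Va Vb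
  | eqL : ℕ → Va → ℕ → Va → PCLTL Va Vb
  | ltB : Vb → Vb → PCLTL Va Vb
  | eqB : Vb → Vb → PCLTL Va Vb
  | not : PCLTL Va Vb → PCLTL Va Vb
  | or : PCLTL Va Vb → PCLTL Va Vb → PCLTL Va Vb
  | next : PCLTL Va Vb → PCLTL Va Vb
  | fp : PCLTL Va Vb → PCLTL Va Vb
  | untl : PCLTL Va Vb → PCLTL Va Vb → PCLTL Va Vb

/-- Prompt-CLTL semantics with bound `k`: `psat σ k i φ` means `(σ, i, k) ⊨ φ`; the
prompt-eventually `F_P ψ` holds at `i` iff `ψ` holds at some `j` with `i ≤ j ≤ i + k`. -/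
def psat {Va Vb : Type} (σ : ℕ → Va ⊕ Vb → ℤ) (k : ℕ) : ℕ → PCLTL Va Vb → Prop
  | i, .ltL i1 x j1 y => σ (i + i1) (Sum.inl x) < σ (i + j1) (Sum.inl y)
  | i, .eqL i1 x j1 y => σ (i + i1) (Sum.inl x) = σ (i + j1) (Sum.inl y)
  | i, .ltB x y => σ i (Sum.inr x) < σ i (Sum.inr y)
  | i, .eqB x y => σ i (Sum.inr x) = σ i (Sum.inr y)
  | i, .not φ => ¬ psat σ k i φ
  | i, .or φ ψ => psat σ k i φ ∨ psat σ k i ψ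
  | i, .next φ => psat σ k (i + 1) φ
  | i, .fp φ => ∃ j, i ≤ j ∧ j ≤ i + k ∧ psat σ k j φ
  | i, .untl φ ψ => ∃ j, i ≤ j ∧ psat σ k j ψ ∧ ∀ l, i ≤ l → l < j → psat σ k l φ

/-- Conjunction of CLTL formulas (derived from `¬` and `∨`). -/
def fand {Va Vb : Type} (φ ψ : CLTL Va Vb) : CLTL Va Vb :=
  .not (.or (.not φ) (.not ψ))

/-- Implication of CLTL formulas (derived from `¬` and `∨`). -/
def fimp {Va Vb : Type} (φ ψ : CLTL Va Vb) : CLTL Va Vb :=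
  .or (.not φ) ψ

/-- Eventually, `F φ = tr U φ`, where `tr` is a tautology. -/
def fF {Va Vb : Type} (tr φ : CLTL Va Vb) : CLTL Va Vb := .untl tr φ

/-- Globally, `G φ = ¬ F ¬ φ = ¬ (tr U ¬ φ)`, where `tr` is a tautology. -/
def fG {Va Vb : Type} (tr φ : CLTL Va Vb) : CLTL Va Vb :=
  .not (.untl tr (.not φ))

/-- The constraint `p`, i.e. `x_c = y_c`, over the variable set extended with the two fresh
system look-ahead variables `x_c = Sum.inr true` and `y_c = Sum.inr false`. -/
def pAtom {Va Vb : Type} : CLTL (Va ⊕ Bool) Vb :=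
  .eqL 0 (Sum.inr true) 0 (Sum.inr false)

/-- A tautology over the extended variable set, `p ∨ ¬ p`. -/
def ptru {Va Vb : Type} : CLTL (Va ⊕ Bool) Vb := .or pAtom (.not pAtom)

/-- `rel_p(φ)`: the CLTL formula over `V ∪ {x_c, y_c}` obtained from the prompt-CLTL formula
`φ` by recursively replacing every subformula `F_P ψ` by
`(p → (p U (¬p U ψ))) ∧ (¬p → (¬p U (p U ψ)))`. -/
def relp {Va Vb : Type} : PCLTL Va Vb → CLTL (Va ⊕ Bool) Vb
  | .ltL i x j y => .ltL i (Sum.inl x) j (Sum.inl y)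
  | .eqL i x j y => .eqL i (Sum.inl x) j (Sum.inl y)
  | .ltB x y => .ltB x y
  | .eqB x y => .eqB x y
  | .not φ => .not (relp φ)
  | .or φ ψ => .or (relp φ) (relp ψ)
  | .next φ => .next (relp φ)
  | .fp φ => fand (fimp pAtom (.untl pAtom (.untl (.not pAtom) (relp φ))))
      (fimp (.not pAtom) (.untl (.not pAtom) (.untl pAtom (relp φ))))
  | .untl φ ψ => .untl (relp φ) (relp ψ)

/-- `c(φ) := (GF p ∧ GF ¬p) ∧ rel_p(φ)`. -/
def cOf {Va Vb : Type} (φ : PCLTL Va Vb) : CLTL (Va ⊕ Bool) Vb :=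
  fand (fand (fG ptru (fF ptru pAtom)) (fG ptru (fF ptru (.not pAtom)))) (relp φ)

/-- `i` is a change point for the colouring `g` (`g i` = "position `i` is green"). -/
def ChangePtP (g : ℕ → Prop) (i : ℕ) : Prop :=
  i = 0 ∨ ¬ (g (i - 1) ↔ g i)

/-- The colouring `g` has infinitely many blocks (infinitely many change points). -/
def InfBlocksP (g : ℕ → Prop) : Prop :=
  ∀ N : ℕ, ∃ i, N < i ∧ ChangePtP g i

/-- The colouring `g` is `k`-spaced: infinitely many blocks, every block of length `≥ k`
(a block spans the positions between two consecutive change points). -/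
def SpacedP (k : ℕ) (g : ℕ → Prop) : Prop :=
  InfBlocksP g ∧
  ∀ i j : ℕ, ChangePtP g i → ChangePtP g j → i < j →
    (∀ l, i < l → l < j → ¬ ChangePtP g l) → k ≤ j - i

/-- The colouring `g` is `k`-bounded: infinitely many blocks, every block of length `≤ k`. -/
def BoundedP (k : ℕ) (g : ℕ → Prop) : Prop :=
  InfBlocksP g ∧
  ∀ i j : ℕ, ChangePtP g i → ChangePtP g j → i < j →
    (∀ l, i < l → l < j → ¬ ChangePtP g l) → j - i ≤ k

/-- Position `i` of `σ'` is green: the constraint `p`, i.e. `x_c = y_c`, holds there. -/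
def green {Va Vb : Type} (σ' : ℕ → (Va ⊕ Bool) ⊕ Vb → ℤ) (i : ℕ) : Prop :=
  σ' i (Sum.inl (Sum.inr true)) = σ' i (Sum.inl (Sum.inr false))

/-- `σ'` is a `p`-colouring of `σ`: a concrete model over `V ∪ {x_c, y_c}` agreeing with
`σ` on `V`. -/
def Colouring {Va Vb : Type} (σ : ℕ → Va ⊕ Vb → ℤ)
    (σ' : ℕ → (Va ⊕ Bool) ⊕ Vb → ℤ) : Prop :=
  (∀ (i : ℕ) (x : Va), σ' i (Sum.inl (Sum.inl x)) = σ i (Sum.inl x)) ∧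
  (∀ (i : ℕ) (b : Vb), σ' i (Sum.inr b) = σ i (Sum.inr b))

/-!
A block of more than `κ` equally coloured positions of `σ` would show up, `k` steps later, as
`κ + 1` equally coloured nodes on the path `π`. Two of these nodes root the same subtree, so the
path can be pumped: repeating the segment between them forever yields another infinite path of
`T` whose frames eventually only take that one colour, contradicting `GF p ∧ GF ¬p` there.
-/

lemma exists_changePtP_of_not_iff {g : ℕ → Prop} {m₁ m₂ : ℕ} (hlt : m₁ < m₂)
    (hne : ¬(g m₁ ↔ g m₂)) : ∃ i, m₁ < i ∧ i ≤ m₂ ∧ ChangePtP g i := by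
  induction m₂ with
  | zero => omega
  | succ m ih =>
    by_cases hstep : g m ↔ g (m + 1)
    · have hm : m₁ < m := by
        rcases Nat.lt_succ_iff_lt_or_eq.mp hlt with h | rfl
        · exact h
        · exact absurd hstep hne
      obtain ⟨i, h₁, h₂, hi⟩ := ih hm (fun h => hne (h.trans hstep))
      exact ⟨i, h₁, by omega, hi⟩
    · exact ⟨m + 1, hlt, le_rfl, Or.inr hstep⟩

lemma boundedP_of_forall_exists_not_iff {K : ℕ} {g : ℕ → Prop}
    (h : ∀ i, ∃ l, i ≤ l ∧ l < i + K ∧ ¬(g l ↔ g i)) : BoundedP K g := by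
  refine ⟨fun N => ?_, fun i j _ _ hij hblock => ?_⟩
  · obtain ⟨l, hNl, -, hl⟩ := h N
    have hNl : N < l := lt_of_le_of_ne hNl (by rintro rfl; exact hl Iff.rfl)
    obtain ⟨i, hNi, -, hi⟩ := exists_changePtP_of_not_iff hNl (fun h => hl h.symm)
    exact ⟨i, hNi, hi⟩
  · by_contra hlong
    obtain ⟨l, hil, hlK, hl⟩ := h i
    have hil : i < l := lt_of_le_of_ne hil (by rintro rfl; exact hl Iff.rfl)
    obtain ⟨c, hic, hcl, hc⟩ := exists_changePtP_of_not_iff hil (fun h => hl h.symm)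
    exact hblock c hic (by omega) hc

lemma Set.Finite.exists_lt_le_ncard_map_eq {β : Type*} {t : Set β} (ht : t.Finite)
    {f : ℕ → β} (hf : ∀ n, f n ∈ t) : ∃ u v, u < v ∧ v ≤ t.ncard ∧ f u = f v := by
  classical
  obtain ⟨x, hx, y, hy, hxy, hfxy⟩ :=
    Finset.exists_ne_map_eq_of_card_lt_of_maps_to (s := Finset.range (t.ncard + 1))
      (t := ht.toFinset) (by simp [Set.ncard_eq_toFinset_card t ht])
      (fun n _ => ht.mem_toFinset.mpr (hf n))
  rw [Finset.mem_range] at hx hy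
  rcases lt_or_gt_of_ne hxy with h | h
  · exact ⟨x, y, h, by omega, hfxy⟩
  · exact ⟨y, x, h, by omega, hfxy.symm⟩

section Paths

variable {α β : Type}

lemma pathNodes_congr {π π' : ℕ → α} {m : ℕ} (h : ∀ n ≤ m, π n = π' n) :
    pathNodes π m = pathNodes π' m :=
  congrArg List.ofFn (funext fun t => h t (Nat.lt_succ_iff.mp t.isLt))

lemma pathNodes_add (π : ℕ → α) (a m : ℕ) :
    pathNodes π (a + m) = pathNodes π a ++ List.ofFn fun t : Fin m => π (a + 1 + t) := by
  unfold pathNodes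
  rw [show a + m + 1 = a + 1 + m by omega, List.ofFn_add]
  rfl

lemma exists_path_labels_periodic {T : List α → β} {π : ℕ → α} {a d : ℕ} (hd : 0 < d)
    (hsub : ∀ w, T (pathNodes π (a + d) ++ w) = T (pathNodes π a ++ w)) :
    ∃ π' : ℕ → α, ∀ m, T (pathNodes π' (a + m)) = T (pathNodes π (a + m % d)) := by
  let π' : ℕ → α := fun n => π (if n ≤ a then n else a + 1 + (n - (a + 1)) % d)
  have hagree : ∀ n ≤ a + d, π' n = π n := by
    intro n hn
    by_cases hna : n ≤ a
    · simp only [π', if_pos hna]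
    · simp only [π', if_neg hna]
      rw [Nat.mod_eq_of_lt (by omega)]
      congr 1
      omega
  have hperiodic : ∀ t, π' (a + d + 1 + t) = π' (a + 1 + t) := by
    intro t
    simp only [π', if_neg (by omega : ¬a + d + 1 + t ≤ a), if_neg (by omega : ¬a + 1 + t ≤ a)]
    rw [show a + d + 1 + t - (a + 1) = t + d by omega, Nat.add_mod_right,
      show a + 1 + t - (a + 1) = t by omega]
  have hshift : ∀ m, T (pathNodes π' (a + d + m)) = T (pathNodes π' (a + m)) := by
    intro m
    rw [pathNodes_add π' (a + d) m, pathNodes_add π' a m, pathNodes_congr hagree,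
      pathNodes_congr fun n hn => hagree n (by omega)]
    simp only [hperiodic]
    exact hsub _
  refine ⟨π', fun m => ?_⟩
  induction m using Nat.strong_induction_on with
  | _ m ih =>
    rcases lt_or_ge m d with hm | hm
    · rw [Nat.mod_eq_of_lt hm]
      exact congrArg T (pathNodes_congr fun n hn => hagree n (by omega))
    · obtain ⟨r, rfl⟩ := Nat.exists_eq_add_of_le hm
      rw [← add_assoc, hshift, ih r (by omega), Nat.add_mod_left]

end Paths

section Semantics

variable {Va Vb : Type} {ρ : ℕ → FrameData Va Vb} {i : ℕ}

lemma ssat_fand {φ ψ : CLTL Va Vb} : ssat ρ i (fand φ ψ) ↔ ssat ρ i φ ∧ ssat ρ i ψ := by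
  simp only [fand, ssat, not_or, not_not]

lemma ssat_fF_or_not {φ ψ : CLTL Va Vb} :
    ssat ρ i (fF (.or φ (.not φ)) ψ) ↔ ∃ j, i ≤ j ∧ ssat ρ j ψ := by
  simp only [fF, ssat]
  exact ⟨fun ⟨j, hij, hj, _⟩ => ⟨j, hij, hj⟩, fun ⟨j, hij, hj⟩ => ⟨j, hij, hj, fun l _ _ => em _⟩⟩

lemma ssat_fG_or_not {φ ψ : CLTL Va Vb} :
    ssat ρ i (fG (.or φ (.not φ)) ψ) ↔ ∀ j, i ≤ j → ssat ρ j ψ := by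
  simp only [fG, ssat, not_exists, not_and]
  exact ⟨fun h j hij => not_not.mp fun hψ => h j hij hψ fun _ _ _ => em _,
    fun h j hij hψ _ => hψ (h j hij)⟩

lemma exists_ssat_not_iff_of_GF_GF_not {φ : CLTL Va Vb}
    (h : ssat ρ i (fand (fG (.or φ (.not φ)) (fF (.or φ (.not φ)) φ))
      (fG (.or φ (.not φ)) (fF (.or φ (.not φ)) (.not φ)))))
    {j : ℕ} (hij : i ≤ j) (P : Prop) : ∃ l, j ≤ l ∧ ¬(ssat ρ l φ ↔ P) := by
  simp only [ssat_fand, ssat_fG_or_not, ssat_fF_or_not] at h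
  by_cases hP : P
  · obtain ⟨l, hjl, hl⟩ := h.2 j hij
    exact ⟨l, hjl, fun h => hl (h.mpr hP)⟩
  · obtain ⟨l, hjl, hl⟩ := h.1 j hij
    exact ⟨l, hjl, fun h => hP (h.mp hl)⟩

lemma ssat_eqL_zero_iff_of_frameAgree [Fintype Vb] {k : ℕ} {σ : ℕ → Va ⊕ Vb → ℤ}
    (h : ∀ n, FrameAgree (min (n + 1) (k + 1)) (mu k σ n) (ρ n)) (m : ℕ) (x y : Va) :
    ssat ρ (m + k) (.eqL 0 x 0 y) ↔ σ m (Sum.inl x) = σ m (Sum.inl y) := by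
  have h0 : 0 < min (m + k + 1) (k + 1) := by omega
  have hxy := (h (m + k)).1 (0, x) (0, y) h0 h0
  have hyx := (h (m + k)).1 (0, y) (0, x) h0 h0
  simp only [mu, Nat.zero_min, Nat.add_zero, show m + k - min (m + k) k = m by omega]
    at hxy hyx
  simp only [ssat, ← hxy, ← hyx, le_antisymm_iff]

end Semantics

theorem stmt17_general {Va Vb : Type} [Fintype Vb] (E : Finset Vb)
    (xc yc : Va) (k κ : ℕ)
    (T : List (GapFuns Vb E) → FrameData Va Vb)
    (hreg : RegularTree T)
    (hκ : {S : List (GapFuns Vb E) → FrameData Va Vb |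
        ∃ η, S = Subtree T η}.ncard = κ)
    (hsat : ∀ π : ℕ → GapFuns Vb E,
      ssat (fun i => T (pathNodes π i)) k
        (fand
          (fG (.or (.eqL 0 xc 0 yc) (.not (.eqL 0 xc 0 yc)))
            (fF (.or (.eqL 0 xc 0 yc) (.not (.eqL 0 xc 0 yc))) (.eqL 0 xc 0 yc)))
          (fG (.or (.eqL 0 xc 0 yc) (.not (.eqL 0 xc 0 yc)))
            (fF (.or (.eqL 0 xc 0 yc) (.not (.eqL 0 xc 0 yc)))
              (.not (.eqL 0 xc 0 yc)))))) :
    ∀ σ : ℕ → Va ⊕ Vb → ℤ,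
      (∃ π : ℕ → GapFuns Vb E,
        ∀ i : ℕ, FrameAgree (min (i + 1) (k + 1)) (mu k σ i) (T (pathNodes π i))) →
      BoundedP (κ + 1) (fun i => σ i (Sum.inl xc) = σ i (Sum.inl yc)) := by
  rintro σ ⟨π, hπ⟩
  refine boundedP_of_forall_exists_not_iff fun i => ?_
  by_contra! hmono
  -- the pigeonhole even excludes monochromatic blocks of length `κ`
  obtain ⟨u, v, huv, hv, hsub⟩ := hreg.exists_lt_le_ncard_map_eq
    (f := fun n => Subtree T (pathNodes π (i + k + n))) fun n => ⟨_, rfl⟩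
  obtain ⟨π', hπ'⟩ := exists_path_labels_periodic (T := T) (a := i + k + u) (d := v - u)
    (by omega) fun w => by
      rw [show i + k + u + (v - u) = i + k + v by omega]
      exact (congrFun hsub w).symm
  obtain ⟨l, hl, hne⟩ := exists_ssat_not_iff_of_GF_GF_not (hsat π') (j := i + k + u)
    (by omega) (σ i (Sum.inl xc) = σ i (Sum.inl yc))
  obtain ⟨r, rfl⟩ := Nat.exists_eq_add_of_le hl
  have hr : r % (v - u) < v - u := Nat.mod_lt _ (by omega)
  have hframe : ssat (fun n => T (pathNodes π' n)) (i + k + u + r) (.eqL 0 xc 0 yc) ↔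
      ssat (fun n => T (pathNodes π n)) (i + u + r % (v - u) + k) (.eqL 0 xc 0 yc) := by
    rw [show i + u + r % (v - u) + k = i + k + u + r % (v - u) by omega]
    simp only [ssat, hπ' r]
  rw [hframe, ssat_eqL_zero_iff_of_frameAgree hπ] at hne
  exact hne (hmono _ (by omega) (by omega))

/-- let `T` be a regular strategy tree with exactly `κ` non-isomorphic
subtrees such that every infinite path `π` satisfies `T(π), k ⊨_s (GF p ∧ GF ¬p)`, where
`p` is the constraint `x_c = y_c` (`x_c, y_c` distinguished look-ahead variables).  Then
every concrete model `σ` admitted along an infinite path of `T` (i.e. with `μ(σ) = T(π)`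
for some infinite path `π`) is `(κ+1)`-bounded: it has infinitely many `p`-blocks, each of
length at most `κ + 1`. -/
theorem stmt17 {Va Vb : Type} [Fintype Vb] (E : Finset Vb)
    (xc yc : Va) (k κ : ℕ)
    (T : List (GapFuns Vb E) → FrameData Va Vb)
    (hT : StrategyTree E k T)
    (hreg : RegularTree T)
    (hκ : {S : List (GapFuns Vb E) → FrameData Va Vb |
        ∃ η, S = Subtree T η}.ncard = κ)
    (hsat : ∀ π : ℕ → GapFuns Vb E,
      ssat (fun i => T (pathNodes π i)) k
        (fand
          (fG (.or (.eqL 0 xc 0 yc) (.not (.eqL 0 xc 0 yc)))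
            (fF (.or (.eqL 0 xc 0 yc) (.not (.eqL 0 xc 0 yc))) (.eqL 0 xc 0 yc)))
          (fG (.or (.eqL 0 xc 0 yc) (.not (.eqL 0 xc 0 yc)))
            (fF (.or (.eqL 0 xc 0 yc) (.not (.eqL 0 xc 0 yc)))
              (.not (.eqL 0 xc 0 yc)))))) :
    ∀ σ : ℕ → Va ⊕ Vb → ℤ,
      (∃ π : ℕ → GapFuns Vb E,
        ∀ i : ℕ, FrameAgree (min (i + 1) (k + 1)) (mu k σ i) (T (pathNodes π i))) →
      BoundedP (κ + 1) (fun i => σ i (Sum.inl xc) = σ i (Sum.inl yc)) :=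
  stmt17_general E xc yc k κ T hreg hκ hsat
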